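/- Any component-level abstraction (π, π_S, τ) from a compositional model (M_L, Σ_L^S, Σ_L^Q) to (M_H, Σ_H^S, Σ_H^Q) — i.e. functors π : 𝒬_H → 𝒬_L sending queries to queries and π_S : 𝒮_H → 𝒮_L with π_S ∘ D_H = D_L ∘ π (where D_L, D_H are the functors sending each abstract query to its diagram in the structure category), together with an epic natural transformation τ : ⟦-⟧_{M_L}^S ∘ π_S ⟹ ⟦-⟧_{M_H}^S between the structure-level semantics functors — induces a downward abstraction (π, τ′) : (Σ_L^Q, M_L) → (Σ_H^Q, M_H), where τ′ is τ whiskered with D_H (i.e. τ′_X := τ_{D_H(X)}); in particular τ′ is an epic natural transformation ⟦-⟧_{M_L}^Q ∘ π ⟹ ⟦-⟧_{M_H}^Q. -/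

import Mathlib

open CategoryTheory MonoidalCategory

universe v u w w'

/-- A Markov category: a symmetric monoidal category whose unit is terminal and in which
every object carries a commutative comonoid "copy" structure compatible with `⊗`. -/
class MarkovCategory' (C : Type u) [Category.{v} C] [MonoidalCategory C]
    [SymmetricCategory C] where
  copy : ∀ X : C, X ⟶ X ⊗ X
  del : ∀ X : C, X ⟶ 𝟙_ C
  del_unique : ∀ {X : C} (f g : X ⟶ 𝟙_ C), f = g
  copy_comm : ∀ X : C, copy X ≫ (β_ X X).hom = copy X
  copy_assoc : ∀ X : C, copy X ≫ (copy X ▷ X) ≫ (α_ X X X).hom = copy X ≫ (X ◁ copy X)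
  copy_counit : ∀ X : C, copy X ≫ (del X ▷ X) ≫ (λ_ X).hom = 𝟙 X
  copy_tensor : ∀ X Y : C,
    copy (X ⊗ Y) = (copy X ⊗ₘ copy Y) ≫ (α_ X X (Y ⊗ Y)).hom ≫ (X ◁ (α_ X Y Y).inv) ≫
      (X ◁ ((β_ X Y).hom ▷ Y)) ≫ (X ◁ (α_ Y X Y).hom) ≫ (α_ X Y (X ⊗ Y)).inv
  copy_unit : copy (𝟙_ C) = (λ_ (𝟙_ C)).inv

namespace CausalAbs

variable {C : Type u} [Category.{v} C] [MonoidalCategory C] [SymmetricCategory C]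
  [MarkovCategory' C]

/-- A morphism of a Markov category is deterministic when it commutes with copying. -/
def Deterministic {X Y : C} (f : X ⟶ Y) : Prop :=
  f ≫ MarkovCategory'.copy Y = MarkovCategory'.copy X ≫ (f ⊗ₘ f)

/-- Composites of deterministic morphisms are deterministic. -/
theorem Deterministic.comp {X Y Z : C} {f : X ⟶ Y} {g : Y ⟶ Z}
    (hf : Deterministic f) (hg : Deterministic g) : Deterministic (f ≫ g) := by
  unfold Deterministic at *
  rw [Category.assoc, hg, ← Category.assoc, hf, Category.assoc, MonoidalCategory.tensorHom_comp_tensorHom]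

/-- The tensor product of a list of objects, read off along an object assignment. -/
def tList {α : Type*} (f : α → C) : List α → C
  | [] => 𝟙_ C
  | x :: l => f x ⊗ tList f l

/-- Coherence isomorphism between the tensor of an appended list and the tensor of the
tensors of the two parts. -/
def splitIso {α : Type*} (f : α → C) : (a b : List α) → (tList f (a ++ b) ≅ tList f a ⊗ tList f b)
  | [], b => (λ_ (tList f b)).symm
  | x :: a, b => whiskerLeftIso (f x) (splitIso f a b) ≪≫ (α_ (f x) (tList f a) (tList f b)).symm

/-- Flattened elementwise application of a list-valued map. -/
def flatM {α β : Type*} (f : α → List β) : List α → List β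
  | [] => []
  | x :: l => f x ++ flatM f l

theorem flatM_append {α β : Type*} (f : α → List β) (a b : List α) :
    flatM f (a ++ b) = flatM f a ++ flatM f b := by
  induction a with
  | nil => rfl
  | cons x a ih => simp [flatM, ih, List.append_assoc]

/-- The extension of the family `τ` of channels of a type alignment to lists of (high-level)
types, via monoidal products. -/
def tauList {α β : Type*} (obL : β → C) (obH : α → C) (π : α → List β)
    (τ : ∀ X : α, tList obL (π X) ⟶ obH X) :
    (l : List α) → (tList obL (flatM π l) ⟶ tList obH l)
  | [] => 𝟙 _
  | X :: l => (splitIso obL (π X) (flatM π l)).hom ≫ (τ X ⊗ₘ tauList obL obH π τ l)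

/-- A query signature: a collection of types and of queries, each with a list of input types
and a list of output types. -/
structure QuerySig : Type (w + 1) where
  Ty : Type
  Qu : Type w
  dom : Qu → List Ty
  cod : Qu → List Ty

/-- A model of a query signature in `C`: semantics for types and for queries. (It stands for
the induced strong symmetric monoidal copy/discard-preserving functor from the free Markov
category on the signature to `C`, which is determined by this data.) -/
structure QueryModel (C : Type u) [Category.{v} C] [MonoidalCategory C] [SymmetricCategory C]
    [MarkovCategory' C] (σ : QuerySig) where
  obj : σ.Ty → C
  interp : ∀ q : σ.Qu, tList obj (σ.dom q) ⟶ tList obj (σ.cod q)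

variable {σL σM σH : QuerySig}

/-- The data of a downward abstraction: a map on types, a family of channels, and
a map sending high-level queries to low-level queries. -/
structure PreDown (ML : QueryModel C σL) (MH : QueryModel C σH) where
  πTy : σH.Ty → List σL.Ty
  τ : ∀ X : σH.Ty, tList ML.obj (πTy X) ⟶ MH.obj X
  πQ : σH.Qu → σL.Qu

/-- The data of an upward abstraction: a type alignment together with a partial map sending
low-level queries to high-level queries. -/
structure PreUp (ML : QueryModel C σL) (MH : QueryModel C σH) where
  πTy : σH.Ty → List σL.Ty
  τ : ∀ X : σH.Ty, tList ML.obj (πTy X) ⟶ MH.obj X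
  ω : σL.Qu → Option σH.Qu

/-- `d` is a downward abstraction: its components (and their monoidal products) are epic
deterministic channels, the query map respects input/output types, and `τ` is natural at
every query, i.e. the consistency equations hold. -/
def PreDown.IsAbstraction {ML : QueryModel C σL} {MH : QueryModel C σH}
    (d : PreDown ML MH) : Prop :=
  (∀ X, Deterministic (d.τ X)) ∧
  (∀ X, Epi (d.τ X)) ∧
  (∀ l : List σH.Ty, Deterministic (tauList ML.obj MH.obj d.πTy d.τ l)) ∧
  (∀ l : List σH.Ty, Epi (tauList ML.obj MH.obj d.πTy d.τ l)) ∧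
  (∀ q : σH.Qu, ∃ (hdom : σL.dom (d.πQ q) = flatM d.πTy (σH.dom q))
      (hcod : σL.cod (d.πQ q) = flatM d.πTy (σH.cod q)),
    tauList ML.obj MH.obj d.πTy d.τ (σH.dom q) ≫ MH.interp q
      = eqToHom (congrArg (tList ML.obj) hdom.symm) ≫ ML.interp (d.πQ q) ≫
          eqToHom (congrArg (tList ML.obj) hcod) ≫ tauList ML.obj MH.obj d.πTy d.τ (σH.cod q))

/-- `u` is an upward abstraction: a type alignment whose components (and their monoidal
products) are epic deterministic channels, together with a partial surjective query map `ω`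
satisfying, whenever defined, the consistency equations. -/
def PreUp.IsAbstraction {ML : QueryModel C σL} {MH : QueryModel C σH}
    (u : PreUp ML MH) : Prop :=
  (∀ X, Deterministic (u.τ X)) ∧
  (∀ X, Epi (u.τ X)) ∧
  (∀ l : List σH.Ty, Deterministic (tauList ML.obj MH.obj u.πTy u.τ l)) ∧
  (∀ l : List σH.Ty, Epi (tauList ML.obj MH.obj u.πTy u.τ l)) ∧
  (∀ qH : σH.Qu, ∃ qL, u.ω qL = some qH) ∧
  (∀ qL qH, u.ω qL = some qH →
    ∃ (hdom : σL.dom qL = flatM u.πTy (σH.dom qH))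
      (hcod : σL.cod qL = flatM u.πTy (σH.cod qH)),
    tauList ML.obj MH.obj u.πTy u.τ (σH.dom qH) ≫ MH.interp qH
      = eqToHom (congrArg (tList ML.obj) hdom.symm) ≫ ML.interp qL ≫
          eqToHom (congrArg (tList ML.obj) hcod) ≫ tauList ML.obj MH.obj u.πTy u.τ (σH.cod qH))

theorem Deterministic.id (X : C) : Deterministic (𝟙 X) := by
  simp [Deterministic]

theorem Deterministic.eqToHom {X Y : C} (h : X = Y) : Deterministic (eqToHom h) := by
  subst h
  simpa using Deterministic.id X

section Whiskering

variable {E Q S Q' S' : Type*} [Category E] [Category Q] [Category S] [Category Q'] [Category S']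

/-- The paper's `τ′ := τ ∘ D_H`, with its source and target rewritten along the equations. -/
def whiskerAlongSquare {F : S' ⥤ E} {G : S ⥤ E} {F' : Q' ⥤ E} {G' : Q ⥤ E}
    {D' : Q' ⥤ S'} {D : Q ⥤ S} {π : Q ⥤ Q'} {πS : S ⥤ S'}
    (hF : D' ⋙ F = F') (hG : D ⋙ G = G') (hsq : π ⋙ D' = D ⋙ πS) (τ : πS ⋙ F ⟶ G) :
    π ⋙ F' ⟶ G' :=
  eqToHom (by rw [← hF, ← Functor.assoc, hsq, Functor.assoc]) ≫ Functor.whiskerLeft D τ ≫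
    eqToHom hG

theorem whiskerAlongSquare_app {F : S' ⥤ E} {G : S ⥤ E} {F' : Q' ⥤ E} {G' : Q ⥤ E}
    {D' : Q' ⥤ S'} {D : Q ⥤ S} {π : Q ⥤ Q'} {πS : S ⥤ S'}
    (hF : D' ⋙ F = F') (hG : D ⋙ G = G') (hsq : π ⋙ D' = D ⋙ πS) (τ : πS ⋙ F ⟶ G) (X : Q) :
    (whiskerAlongSquare hF hG hsq τ).app X =
      eqToHom (by rw [← hF]; exact congrArg F.obj (Functor.congr_obj hsq X)) ≫
        τ.app (D.obj X) ≫ eqToHom (Functor.congr_obj hG X) := by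
  simp [whiskerAlongSquare]

end Whiskering

/-- Any component-level abstraction `(π, π_S, τ)` between compositional models — functors
`π : 𝒬_H ⥤ 𝒬_L` sending queries to queries and `π_S : 𝒮_H ⥤ 𝒮_L` with
`π_S ∘ D_H = D_L ∘ π` (where `D_L, D_H` send each abstract query to its diagram in the
structure category and satisfy `⟦-⟧^S ∘ D = ⟦-⟧^Q`), together with an epic natural
transformation `τ : ⟦-⟧_{M_L}^S ∘ π_S ⟹ ⟦-⟧_{M_H}^S` with deterministic components —
induces a downward abstraction `(π, τ′) : (Σ_L^Q, M_L) → (Σ_H^Q, M_H)`: the whiskering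
`τ′ := τ ∘ D_H` (i.e. `τ′_X := τ_{D_H(X)}`) is an epic natural transformation
`⟦-⟧_{M_L}^Q ∘ π ⟹ ⟦-⟧_{M_H}^Q` with deterministic components, and `π` sends queries of
`Σ_H^Q` to queries of `Σ_L^Q`. -/
theorem componentLevel_abstraction_induces_downward_abstraction
    {C : Type u} [Category.{v} C] [MonoidalCategory C] [SymmetricCategory C]
    [MarkovCategory' C]
    {QL QH SL SH : Type*} [Category QL] [Category QH] [Category SL] [Category SH]
    (QsemL : QL ⥤ C) (QsemH : QH ⥤ C) (SsemL : SL ⥤ C) (SsemH : SH ⥤ C)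
    (DL : QL ⥤ SL) (DH : QH ⥤ SH)
    (hDL : DL ⋙ SsemL = QsemL) (hDH : DH ⋙ SsemH = QsemH)
    (queryL : ∀ ⦃X Y : QL⦄, (X ⟶ Y) → Prop) (queryH : ∀ ⦃X Y : QH⦄, (X ⟶ Y) → Prop)
    (π : QH ⥤ QL) (πS : SH ⥤ SL)
    (hsq : π ⋙ DL = DH ⋙ πS)
    (hquery : ∀ ⦃X Y : QH⦄ (f : X ⟶ Y), queryH f → queryL (π.map f))
    (τ : πS ⋙ SsemL ⟶ SsemH)
    (hepi : ∀ X : SH, Epi (τ.app X)) (hdet : ∀ X : SH, Deterministic (τ.app X)) :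
    ∃ τ' : π ⋙ QsemL ⟶ QsemH,
      (∀ X : QH, Epi (τ'.app X)) ∧ (∀ X : QH, Deterministic (τ'.app X)) ∧
      (∀ ⦃X Y : QH⦄ (f : X ⟶ Y), queryH f → queryL (π.map f)) ∧
      ∀ X : QH,
        τ'.app X =
          eqToHom (by
              rw [← hDL]
              exact congrArg SsemL.obj (Functor.congr_obj hsq X)) ≫
            τ.app (DH.obj X) ≫ eqToHom (Functor.congr_obj hDH X) := by
  refine ⟨whiskerAlongSquare hDL hDH hsq τ, fun X => ?_, fun X => ?_, hquery,
    whiskerAlongSquare_app hDL hDH hsq τ⟩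
  · rw [whiskerAlongSquare_app]
    infer_instance
  · rw [whiskerAlongSquare_app]
    exact (Deterministic.eqToHom _).comp ((hdet _).comp (Deterministic.eqToHom _))

end CausalAbs
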